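/- A finitely complete category C is diexact if and only if: (a) every span arising as the pullback of a cospan admits a pushout which is stable under pullback, and (b) every Mal'cev span in C is a pullback span, i.e. arises as the pullback of some cospan. -/

import Mathlib

open CategoryTheory CategoryTheory.Limits

universe v u

section Defs

variable {C : Type u} [Category.{v} C]

/-- A span `(f, g)` is *jointly monic* if `u ≫ f = v ≫ f` and `u ≫ g = v ≫ g` imply `u = v`
(equivalently, the induced map into the product is a monomorphism). -/
def JointlyMonic {Z A B : C} (f : Z ⟶ A) (g : Z ⟶ B) : Prop :=
  ∀ ⦃X : C⦄ (u v : X ⟶ Z), u ≫ f = v ≫ f → u ≫ g = v ≫ g → u = v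

/-- `(P, π₁, π₂, π₃)` is the limit `C ×_B C ×_A C` of triples `(c₁, c₂, c₃)` of generalized
elements of `Z` with `g ∘ π₁ = g ∘ π₂` and `f ∘ π₂ = f ∘ π₃`. -/
structure IsTripleLimit {Z A B : C} (f : Z ⟶ A) (g : Z ⟶ B) {P : C}
    (π₁ π₂ π₃ : P ⟶ Z) : Prop where
  w₁ : π₁ ≫ g = π₂ ≫ g
  w₂ : π₂ ≫ f = π₃ ≫ f
  lift : ∀ ⦃X : C⦄ (x₁ x₂ x₃ : X ⟶ Z), x₁ ≫ g = x₂ ≫ g → x₂ ≫ f = x₃ ≫ f →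
    ∃! u : X ⟶ P, u ≫ π₁ = x₁ ∧ u ≫ π₂ = x₂ ∧ u ≫ π₃ = x₃

/-- A jointly monic span `(f, g)` is a *Mal'cev span* if, for the limit
`P = C ×_B C ×_A C`, there exists `p : P ⟶ C` with `f ∘ p = f ∘ π₁` and `g ∘ p = g ∘ π₃`. -/
def IsMalcevSpan {Z A B : C} (f : Z ⟶ A) (g : Z ⟶ B) : Prop :=
  JointlyMonic f g ∧
  ∀ ⦃P : C⦄ (π₁ π₂ π₃ : P ⟶ Z), IsTripleLimit f g π₁ π₂ π₃ →
    ∃ p : P ⟶ Z, p ≫ f = π₁ ≫ f ∧ p ≫ g = π₃ ≫ g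

/-- A commuting square (with legs `f, g` and colegs `h, k`) is *stable under pullback* if
every commutative cube over it whose four side faces are pullbacks has a pushout top face. -/
def PushoutStable {Z A B D : C} (f : Z ⟶ A) (g : Z ⟶ B) (h : A ⟶ D) (k : B ⟶ D) : Prop :=
  ∀ ⦃Z' A' B' D' : C⦄ (f' : Z' ⟶ A') (g' : Z' ⟶ B') (h' : A' ⟶ D') (k' : B' ⟶ D')
    (αZ : Z' ⟶ Z) (αA : A' ⟶ A) (αB : B' ⟶ B) (αD : D' ⟶ D),
    IsPullback f' αZ αA f → IsPullback g' αZ αB g →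
    IsPullback h' αA αD h → IsPullback k' αB αD k →
    f' ≫ h' = g' ≫ k' → IsPushout f' g' h' k'

/-- A category is *diexact* if every Mal'cev span admits a pushout, and every pushout square
of a Mal'cev span is stable under pullback and is itself a pullback square. -/
def Diexact (C : Type u) [Category.{v} C] : Prop :=
  ∀ ⦃Z A B : C⦄ (f : Z ⟶ A) (g : Z ⟶ B), IsMalcevSpan f g →
    (∃ (D : C) (h : A ⟶ D) (k : B ⟶ D), IsPushout f g h k) ∧
    ∀ ⦃D : C⦄ (h : A ⟶ D) (k : B ⟶ D), IsPushout f g h k →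
      PushoutStable f g h k ∧ IsPullback f g h k

/-- An internal equivalence relation: a jointly monic pair which is reflexive, symmetric
and transitive. -/
def IsEquivRelation [HasPullbacks C] {E A : C} (s t : E ⟶ A) : Prop :=
  JointlyMonic s t ∧
  (∃ r : A ⟶ E, r ≫ s = 𝟙 A ∧ r ≫ t = 𝟙 A) ∧
  (∃ σ : E ⟶ E, σ ≫ s = t ∧ σ ≫ t = s) ∧
  (∃ τ : pullback t s ⟶ E,
     τ ≫ s = pullback.fst t s ≫ s ∧ τ ≫ t = pullback.snd t s ≫ t)

/-- A finitely complete category is *Barr-exact* if every kernel pair has a coequaliser,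
regular epimorphisms are stable under pullback, and every internal equivalence relation is
effective (i.e. a kernel pair). -/
def BarrExact (C : Type u) [Category.{v} C] [HasFiniteLimits C] : Prop :=
  (∀ ⦃X Y : C⦄ (f : X ⟶ Y), HasCoequalizer (pullback.fst f f) (pullback.snd f f)) ∧
  (∀ ⦃X Y W : C⦄ (f : X ⟶ Y) (g : W ⟶ Y),
     Nonempty (RegularEpi f) → Nonempty (RegularEpi (pullback.snd f g))) ∧
  (∀ ⦃E A : C⦄ (s t : E ⟶ A), IsEquivRelation s t →
     ∃ (Q : C) (q : A ⟶ Q), IsPullback s t q q)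

/-- A category is *amalgamable* if every span of monomorphisms admits a pushout which is
stable under pullback and is itself a pullback square. -/
def Amalgamable (C : Type u) [Category.{v} C] : Prop :=
  ∀ ⦃Z A B : C⦄ (f : Z ⟶ A) (g : Z ⟶ B), Mono f → Mono g →
    ∃ (D : C) (h : A ⟶ D) (k : B ⟶ D),
      IsPushout f g h k ∧ PushoutStable f g h k ∧ IsPullback f g h k

/-- A category is *adhesive* if it admits pushouts along monomorphisms, and these pushouts
are stable under pullback and are pullback squares. -/
def AdhesiveCat (C : Type u) [Category.{v} C] : Prop :=
  ∀ ⦃Z A B : C⦄ (f : Z ⟶ A) (g : Z ⟶ B), Mono f →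
    (∃ (D : C) (h : A ⟶ D) (k : B ⟶ D), IsPushout f g h k) ∧
    ∀ ⦃D : C⦄ (h : A ⟶ D) (k : B ⟶ D), IsPushout f g h k →
      PushoutStable f g h k ∧ IsPullback f g h k

/-- `u` factors through `v` (as morphisms into a common object `X`). -/
def FactorsThru {U V X : C} (u : U ⟶ X) (v : V ⟶ X) : Prop :=
  ∃ w : U ⟶ V, w ≫ v = u

/-- A monomorphism `m : P ⟶ X` is the *union* of the subobjects `a : A ⟶ X` and `b : B ⟶ X`:
both factor through `m`, and `m` factors through any monomorphism through which both factor. -/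
def IsUnionOf {A B P X : C} (a : A ⟶ X) (b : B ⟶ X) (m : P ⟶ X) : Prop :=
  Mono m ∧ FactorsThru a m ∧ FactorsThru b m ∧
  ∀ ⦃Q : C⦄ (c : Q ⟶ X), Mono c → FactorsThru a c → FactorsThru b c → FactorsThru m c

end Defs

/-!
Every pullback span is a Mal'cev span: the Mal'cev operation `P ⟶ Z` is the map into the
pullback induced by `π₁ ≫ f` and `π₃ ≫ g`. So diexactness yields (a) and (b). Conversely, by (b)
a Mal'cev span `(f, g)` is the pullback of some cospan `(h₀, k₀)`, and by (a) it has a stable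
pushout. Any other pushout is canonically isomorphic to this one, hence also stable, and it is a
pullback square because the pullback square over `(h₀, k₀)` factors through it.
-/

variable {C : Type u} [Category.{v} C] {Z A B D : C} {f : Z ⟶ A} {g : Z ⟶ B}

lemma CategoryTheory.IsPullback.of_comp_cospan {h : A ⟶ D} {k : B ⟶ D} {X : C} {m : D ⟶ X}
    (comm : f ≫ h = g ≫ k) (hpb : IsPullback f g (h ≫ m) (k ≫ m)) :
    IsPullback f g h k := by
  refine IsPullback.of_isLimit' ⟨comm⟩ (PullbackCone.IsLimit.mk _
    (fun s => hpb.lift s.fst s.snd (by rw [reassoc_of% s.condition]))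
    (fun s => hpb.lift_fst _ _ _) (fun s => hpb.lift_snd _ _ _) ?_)
  intro s w hw₁ hw₂
  apply hpb.hom_ext <;> simp [hw₁, hw₂]

lemma CategoryTheory.IsPullback.isMalcevSpan {h : A ⟶ D} {k : B ⟶ D} (hpb : IsPullback f g h k) :
    IsMalcevSpan f g := by
  refine ⟨fun X u v hf hg => hpb.hom_ext hf hg, fun P π₁ π₂ π₃ ht => ?_⟩
  have w : (π₁ ≫ f) ≫ h = (π₃ ≫ g) ≫ k :=
    calc (π₁ ≫ f) ≫ h = π₁ ≫ g ≫ k := by rw [Category.assoc, hpb.w]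
      _ = π₂ ≫ f ≫ h := by rw [reassoc_of% ht.w₁, hpb.w]
      _ = (π₃ ≫ g) ≫ k := by rw [reassoc_of% ht.w₂, hpb.w, Category.assoc]
  exact ⟨hpb.lift (π₁ ≫ f) (π₃ ≫ g) w, hpb.lift_fst _ _ _, hpb.lift_snd _ _ _⟩

lemma CategoryTheory.IsPushout.isPullback_of_isPullback {h : A ⟶ D} {k : B ⟶ D} {D₀ : C}
    {h₀ : A ⟶ D₀} {k₀ : B ⟶ D₀} (hpo : IsPushout f g h k) (hpb : IsPullback f g h₀ k₀) :
    IsPullback f g h k := by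
  have hh : h ≫ hpo.desc h₀ k₀ hpb.w = h₀ := hpo.inl_desc _ _ _
  have hk : k ≫ hpo.desc h₀ k₀ hpb.w = k₀ := hpo.inr_desc _ _ _
  exact IsPullback.of_comp_cospan hpo.w (by rwa [hh, hk])

lemma PushoutStable.of_iso {P : C} {p : A ⟶ P} {q : B ⟶ P} {h : A ⟶ D} {k : B ⟶ D}
    (hs : PushoutStable f g p q) (e : D ≅ P) (hp : h ≫ e.hom = p) (hq : k ≫ e.hom = q) :
    PushoutStable f g h k := by
  intro Z' A' B' D' f' g' h' k' αZ αA αB αD hf hg hh hk comm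
  refine hs f' g' h' k' αZ αA αB (αD ≫ e.hom) hf hg ?_ ?_ comm
  · exact hh.of_iso (Iso.refl _) (Iso.refl _) (Iso.refl _) e (by simp) (by simp) (by simp)
      (by simp [hp])
  · exact hk.of_iso (Iso.refl _) (Iso.refl _) (Iso.refl _) e (by simp) (by simp) (by simp)
      (by simp [hq])

lemma PushoutStable.of_isPushout {P : C} {p : A ⟶ P} {q : B ⟶ P} {h : A ⟶ D} {k : B ⟶ D}
    (hs : PushoutStable f g p q) (hpo : IsPushout f g p q) (hpo' : IsPushout f g h k) :
    PushoutStable f g h k :=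
  hs.of_iso (hpo'.isoIsPushout _ _ hpo) (by simp) (by simp)

theorem diexact_iff_stable_pushouts_of_pullbacks_general {C : Type u} [Category.{v} C] :
    Diexact C ↔
      ((∀ ⦃Z A B D : C⦄ (f : Z ⟶ A) (g : Z ⟶ B) (h : A ⟶ D) (k : B ⟶ D),
          IsPullback f g h k →
          ∃ (P : C) (p : A ⟶ P) (q : B ⟶ P), IsPushout f g p q ∧ PushoutStable f g p q) ∧
       (∀ ⦃Z A B : C⦄ (f : Z ⟶ A) (g : Z ⟶ B), IsMalcevSpan f g →
          ∃ (D : C) (h : A ⟶ D) (k : B ⟶ D), IsPullback f g h k)) := by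
  constructor
  · intro hd
    refine ⟨fun Z A B D f g h k hpb => ?_, fun Z A B f g hmal => ?_⟩
    · obtain ⟨⟨P, p, q, hpo⟩, hall⟩ := hd f g hpb.isMalcevSpan
      exact ⟨P, p, q, hpo, (hall p q hpo).1⟩
    · obtain ⟨⟨D, h, k, hpo⟩, hall⟩ := hd f g hmal
      exact ⟨D, h, k, (hall h k hpo).2⟩
  · rintro ⟨hstable, hmalcev⟩ Z A B f g hmal
    obtain ⟨D₀, h₀, k₀, hpb⟩ := hmalcev f g hmal
    obtain ⟨P, p, q, hpo, hs⟩ := hstable f g h₀ k₀ hpb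
    exact ⟨⟨P, p, q, hpo⟩, fun D h k hpo' =>
      ⟨hs.of_isPushout hpo hpo', hpo'.isPullback_of_isPullback hpb⟩⟩

/-- A finitely complete category is diexact if and only if (a) every
span arising as the pullback of a cospan admits a pushout which is stable under pullback,
and (b) every Mal'cev span is a pullback span. -/
theorem diexact_iff_stable_pushouts_of_pullbacks {C : Type u} [Category.{v} C]
    [HasFiniteLimits C] :
    Diexact C ↔
      ((∀ ⦃Z A B D : C⦄ (f : Z ⟶ A) (g : Z ⟶ B) (h : A ⟶ D) (k : B ⟶ D),
          IsPullback f g h k →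
          ∃ (P : C) (p : A ⟶ P) (q : B ⟶ P), IsPushout f g p q ∧ PushoutStable f g p q) ∧
       (∀ ⦃Z A B : C⦄ (f : Z ⟶ A) (g : Z ⟶ B), IsMalcevSpan f g →
          ∃ (D : C) (h : A ⟶ D) (k : B ⟶ D), IsPullback f g h k)) :=
  diexact_iff_stable_pushouts_of_pullbacks_general
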